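/- Specialize the parameters to t1 = −q^{−1} and t2 = 1, where q is an invertible indeterminate (i.e. work over ℤ[q, q^{−1}] ⊗ Q(ℤ[Λ])). Then for every v ∈ W, ∑_{w ≤ v} p(w,v) = ∏_{β ∈ R(v)} (1 − q^{−1} e^{β})/(1 − e^{β}), where R(v) is the inversion set of v and the sum is over all w ≤ v in the Bruhat order. -/

import Mathlib

open CoxeterSystem
open scoped Classical

/-- `E(λ) = e^{-λ} - 1`. -/
noncomputable def Eelt {Λ : Type*} [AddCommGroup Λ] {K : Type*} [Field K]
    (exp : Multiplicative Λ →* Kˣ) (lam : Λ) : K :=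
  ((exp (Multiplicative.ofAdd (-lam)) : Kˣ) : K) - 1

/-- The Bruhat order on `W`: `u ≤ v` iff there is a chain from `u` to `v` each of whose
steps multiplies on the right by a reflection while increasing the length. -/
def bruhatLE {r : ℕ} {W : Type*} [Group W] {M : CoxeterMatrix (Fin r)}
    (cs : CoxeterSystem M W) (u v : W) : Prop :=
  Relation.ReflTransGen
    (fun a b => (∃ t, cs.IsReflection t ∧ b = a * t) ∧ cs.length a < cs.length b) u v

/-- The strict Bruhat order on `W`. -/
def bruhatLT {r : ℕ} {W : Type*} [Group W] {M : CoxeterMatrix (Fin r)}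
    (cs : CoxeterSystem M W) (u v : W) : Prop :=
  Relation.TransGen
    (fun a b => (∃ t, cs.IsReflection t ∧ b = a * t) ∧ cs.length a < cs.length b) u v

/-- `p(w,v)`: the coefficient of `h_w` in the expansion `Y_v = ∑_w p(w,v) h_w` of the
Yang–Baxter basis element `Y_v` in the standard basis (`hb w = h w`). -/
noncomputable def pCoeff {W : Type*} {K : Type*} [Field K] {H : Type*} [Ring H] [Algebra K H]
    (hb : Module.Basis W K H) (Y : W → H) (w v : W) : K :=
  hb.repr (Y v) w

/-!
Let `τ` be the linear form summing the coordinates in the basis `(h_w)`. Because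
`t₁ + t₂ - t₁ t₂ = 1`, the quadratic relation gives `τ (x h_s) = τ x`, so the recursion
`Y_{ws} = Y_w (h_s + c)` gives `τ (Y_{ws}) = τ (Y_w) (1 + c)`. Along a reduced word of `v`,
`c = (1 - q⁻¹) / (e^{-β} - 1)` with `β` running through `R(v)`, and then
`1 + c = (1 - q⁻¹ e^β) / (1 - e^β)`.

It remains that `Y_v` is supported on `{w ≤ v}`, so that `τ (Y_v)` is the sum in the statement.
This is the lifting property `u ≤ v < v s ⇒ u s ≤ v s` of the Bruhat order, i.e. monotonicity
of `w ↦ max (w, w s)`, which rests on the strong exchange condition. The latter is proved with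
the sign representation of `W` on `W × {±1}`, where `s` acts by `(t, ε) ↦ (s t s, ±ε)` with
the sign flipped exactly at `t = s`; the braid relations hold because every reflection occurs an
even number of times in the left inversion sequence of a braid word `(s_i s_j)^{m_ij}`.
-/

namespace CoxeterSystem

section StrongExchange

variable {B W : Type*} [Group W] {M : CoxeterMatrix B} (cs : CoxeterSystem M W)

local prefix:100 "s" => cs.simple
local prefix:100 "π" => cs.wordProd
local prefix:100 "ℓ" => cs.length
local prefix:100 "lis" => cs.leftInvSeq

theorem wordProd_take_add_one (ω : List B) {k : ℕ} (hk : k < ω.length) :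
    π (ω.take (k + 1)) = π (ω.take k) * s ω[k] := by
  rw [← List.take_concat_get' ω k hk, wordProd_append, wordProd_singleton]

variable {cs} in
theorem IsReduced.length_wordProd_take_mul_simple {ω : List B} (hω : cs.IsReduced ω) {k : ℕ}
    (hk : k < ω.length) : ℓ (π (ω.take k) * s ω[k]) = ℓ (π (ω.take k)) + 1 := by
  rw [← wordProd_take_add_one cs ω hk, (hω.take (k + 1)).eq, (hω.take k).eq]
  simp only [List.length_take]
  omega

theorem prod_map_alternatingWord_two_mul {G : Type*} [Monoid G] (f : B → G) (i j : B) (m : ℕ) :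
    ((alternatingWord i j (2 * m)).map f).prod = (f i * f j) ^ m := by
  induction m with
  | zero => simp [alternatingWord]
  | succ m ih =>
    rw [show 2 * (m + 1) = 2 * m + 1 + 1 by ring, alternatingWord_succ', alternatingWord_succ']
    simp [ih, pow_succ', mul_assoc]

theorem even_count_leftInvSeq_alternatingWord_two_mul (i j : B) (t : W) :
    Even ((lis (alternatingWord i j (2 * M i j))).count t) := by
  have hlis : lis (alternatingWord i j (2 * M i j))
      = (List.range (2 * M i j)).map fun k => s i * (s j * s i) ^ k := by
    refine List.ext_getElem (by simp) fun k hk _ => ?_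
    rw [getElem_leftInvSeq_alternatingWord cs i j _ k (by simpa using hk),
      prod_alternatingWord_eq_mul_pow]
    simp [show (2 * k + 1) / 2 = k by omega]
  have hperiod : ∀ k, s i * (s j * s i) ^ (M i j + k) = s i * (s j * s i) ^ k := by
    intro k; rw [pow_add, simple_mul_simple_pow', one_mul]
  rw [hlis, two_mul, List.range_add, List.map_append, List.map_map, List.count_append]
  simp only [Function.comp_def, hperiod]
  exact ⟨_, rfl⟩

noncomputable def signPerm (i : B) : Equiv.Perm (W × ℤˣ) :=
  Function.Involutive.toPerm (fun p => (s i * p.1 * s i, if p.1 = s i then -p.2 else p.2)) <| by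
    rintro ⟨t, ε⟩
    by_cases ht : t = s i
    · simp [ht]
    · simp [ht, mul_assoc, mul_eq_one_iff_eq_inv]

theorem signPerm_apply (i : B) (t : W) (ε : ℤˣ) :
    cs.signPerm i (t, ε) = (s i * t * s i, if t = s i then -ε else ε) := rfl

theorem prod_map_signPerm_apply (ω : List B) (t : W) (ε : ℤˣ) :
    (ω.map cs.signPerm).prod (t, ε)
      = (π ω * t * (π ω)⁻¹, (-1) ^ (lis ω).count (π ω * t * (π ω)⁻¹) * ε) := by
  induction ω generalizing t ε with
  | nil => simp
  | cons i ω ih =>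
    simp only [List.map_cons, List.prod_cons, Equiv.Perm.mul_apply, ih, signPerm_apply,
      wordProd_cons, leftInvSeq, List.count_cons]
    set x := π ω * t * (π ω)⁻¹
    have hx : s i * π ω * t * (s i * π ω)⁻¹ = MulAut.conj (s i) x := by
      simp [x, mul_assoc]
    rw [hx, List.count_map_of_injective _ _ (MulAut.conj (s i)).injective]
    refine Prod.ext (by simp) ?_
    by_cases h : x = s i
    · simp [h, pow_succ]
    · simp [h, mul_eq_one_iff_inv_eq, Ne.symm h]

theorem isLiftable_signPerm : M.IsLiftable cs.signPerm := by
  intro i j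
  have hπ : π (alternatingWord i j (2 * M i j)) = 1 := by
    rw [wordProd, prod_map_alternatingWord_two_mul, simple_mul_simple_pow]
  refine Equiv.ext fun ⟨t, ε⟩ => ?_
  rw [← prod_map_alternatingWord_two_mul, prod_map_signPerm_apply, hπ]
  simp [(cs.even_count_leftInvSeq_alternatingWord_two_mul i j t).neg_one_pow]

noncomputable def signRep : W →* Equiv.Perm (W × ℤˣ) :=
  cs.lift ⟨cs.signPerm, cs.isLiftable_signPerm⟩

theorem signRep_wordProd_apply_conj (ω : List B) (t : W) (ε : ℤˣ) :
    cs.signRep (π ω) ((π ω)⁻¹ * t * π ω, ε) = (t, (-1) ^ (lis ω).count t * ε) := by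
  have hπ : cs.signRep (π ω) = (ω.map cs.signPerm).prod := by
    simp [signRep, wordProd, map_list_prod, Function.comp_def]
  simp [hπ, prod_map_signPerm_apply, mul_assoc]

theorem signRep_simple (i : B) : cs.signRep (s i) = cs.signPerm i := lift_apply_simple _ _ i

theorem signRep_apply (w t : W) (ε : ℤˣ) :
    cs.signRep w (t, ε) = (w * t * w⁻¹, (cs.signRep w (t, 1)).2 * ε) := by
  obtain ⟨ω, rfl⟩ := cs.wordProd_surjective w
  have h := cs.signRep_wordProd_apply_conj ω (π ω * t * (π ω)⁻¹)
  rw [show (π ω)⁻¹ * (π ω * t * (π ω)⁻¹) * π ω = t by group] at h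
  rw [h, h, mul_one]

theorem signRep_apply_self_of_isReflection {t : W} (ht : cs.IsReflection t) (ε : ℤˣ) :
    cs.signRep t (t, ε) = (t, -ε) := by
  obtain ⟨u, i, rfl⟩ := ht
  set δ := (cs.signRep u⁻¹ (u * s i * u⁻¹, 1)).2
  have hconj : ∀ ε', cs.signRep u⁻¹ (u * s i * u⁻¹, ε') = (s i, δ * ε') := fun ε' => by
    rw [signRep_apply]; exact Prod.ext (by group) rfl
  have hback : cs.signRep u (s i, δ) = (u * s i * u⁻¹, 1) := by
    rw [← mul_one δ, ← hconj, ← Equiv.Perm.mul_apply, ← map_mul, mul_inv_cancel, map_one,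
      Equiv.Perm.one_apply]
  rw [signRep_apply, Prod.mk.injEq] at hback
  rw [map_mul, map_mul, Equiv.Perm.mul_apply, Equiv.Perm.mul_apply, hconj, signRep_simple,
    signPerm_apply, if_pos rfl, simple_mul_simple_self, one_mul, signRep_apply]
  refine Prod.ext rfl ?_
  rw [mul_neg, neg_inj, ← mul_assoc, hback.2, one_mul]

theorem neg_one_pow_count_leftInvSeq_of_wordProd_eq_mul {t : W} (ht : cs.IsReflection t)
    {ω ω' : List B} (h : π ω' = t * π ω) :
    (-1 : ℤˣ) ^ (lis ω').count t = -(-1) ^ (lis ω).count t := by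
  have key := cs.signRep_wordProd_apply_conj ω' t 1
  rw [h, show (t * π ω)⁻¹ * t * (t * π ω) = (π ω)⁻¹ * t * π ω by group, map_mul,
    Equiv.Perm.mul_apply, signRep_wordProd_apply_conj, signRep_apply_self_of_isReflection cs ht]
    at key
  simpa using (congrArg Prod.snd key).symm

/-- The strong exchange condition. -/
theorem mem_leftInvSeq_of_isLeftInversion {ω : List B} {t : W}
    (ht : cs.IsLeftInversion (π ω) t) : t ∈ lis ω := by
  by_contra hnot
  obtain ⟨ω', hω', hπ'⟩ := cs.exists_isReduced (t * π ω)
  have hmem : t ∈ lis ω' := by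
    by_contra hnot'
    have h := cs.neg_one_pow_count_leftInvSeq_of_wordProd_eq_mul ht.1 hπ'.symm
    rw [List.count_eq_zero_of_not_mem hnot, List.count_eq_zero_of_not_mem hnot'] at h
    exact absurd h (by decide)
  have hlt := (cs.isLeftInversion_of_mem_leftInvSeq hω' hmem).2
  rw [← hπ', ← mul_assoc, ht.1.mul_self, one_mul] at hlt
  exact lt_asymm ht.2 hlt

theorem exists_wordProd_eraseIdx_eq_mul_of_isLeftInversion {ω : List B} {t : W}
    (ht : cs.IsLeftInversion (π ω) t) : ∃ j < ω.length, π (ω.eraseIdx j) = t * π ω := by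
  obtain ⟨j, hj, rfl⟩ := List.getElem_of_mem (cs.mem_leftInvSeq_of_isLeftInversion ht)
  refine ⟨j, by simpa using hj, ?_⟩
  rw [← getD_leftInvSeq_mul_wordProd, List.getD_eq_getElem]

end StrongExchange

section BruhatOrder

variable {r : ℕ} {W : Type*} [Group W] {M : CoxeterMatrix (Fin r)} (cs : CoxeterSystem M W)

local prefix:100 "s" => cs.simple
local prefix:100 "π" => cs.wordProd
local prefix:100 "ℓ" => cs.length

theorem bruhatLE_mul_reflection {w t : W} (ht : cs.IsReflection t) (h : ℓ w < ℓ (w * t)) :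
    bruhatLE cs w (w * t) :=
  .single ⟨⟨t, ht, rfl⟩, h⟩

theorem mul_reflection_bruhatLE {w t : W} (ht : cs.IsReflection t) (h : ℓ (w * t) < ℓ w) :
    bruhatLE cs (w * t) w :=
  .single ⟨⟨t, ht, by rw [mul_assoc, ht.mul_self, mul_one]⟩, h⟩

theorem wordProd_eraseIdx_bruhatLE {ω : List (Fin r)} (hω : cs.IsReduced ω) {j : ℕ}
    (hj : j < ω.length) : bruhatLE cs (π (ω.eraseIdx j)) (π ω) := by
  have hj' : j < (cs.rightInvSeq ω).length := by simpa using hj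
  have ht := cs.isReflection_of_mem_rightInvSeq ω (List.getElem_mem hj')
  have heq : π ω * (cs.rightInvSeq ω)[j] = π (ω.eraseIdx j) := by
    rw [← List.getD_eq_getElem _ 1 hj', wordProd_mul_getD_rightInvSeq]
  rw [← heq]
  refine cs.mul_reflection_bruhatLE ht ?_
  rw [heq, hω]
  calc ℓ (π (ω.eraseIdx j)) ≤ (ω.eraseIdx j).length := cs.length_wordProd_le _
    _ < ω.length := by rw [List.length_eraseIdx_of_lt hj]; omega

theorem mul_reflection_mul_simple_bruhatLE {v t : W} {i : Fin r} (ht : cs.IsReflection t)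
    (hvt : ℓ (v * t) < ℓ v) (hvs : ℓ (v * s i) < ℓ v) : bruhatLE cs (v * t * s i) v := by
  obtain ⟨ω, hω, hπ⟩ := cs.exists_isReduced (v * s i)
  have hv : π (ω ++ [i]) = v := by
    rw [wordProd_append, wordProd_singleton, ← hπ, simple_mul_simple_cancel_right]
  have hinv : cs.IsLeftInversion (π (ω ++ [i])) (v * t * v⁻¹) := by
    refine ⟨ht.conj v, ?_⟩
    rwa [hv, inv_mul_cancel_right]
  obtain ⟨j, hj, hjπ⟩ := cs.exists_wordProd_eraseIdx_eq_mul_of_isLeftInversion hinv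
  rw [hv, inv_mul_cancel_right] at hjπ
  rcases lt_or_ge j ω.length with hlt | hge
  · rw [List.eraseIdx_append_of_lt_length hlt, wordProd_append, wordProd_singleton] at hjπ
    rw [← hjπ, simple_mul_simple_cancel_right]
    refine .trans (cs.wordProd_eraseIdx_bruhatLE hω hlt) ?_
    rw [← hπ]
    exact cs.mul_reflection_bruhatLE (cs.isReflection_simple i) hvs
  · have hj0 : j - ω.length = 0 := by simp at hj; omega
    rw [List.eraseIdx_append_of_length_le hge, hj0, List.eraseIdx_cons_zero, List.append_nil,
      ← hπ] at hjπ
    rw [← hjπ, simple_mul_simple_cancel_right]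
    exact .refl

noncomputable def maxMulSimple (w : W) (i : Fin r) : W :=
  if ℓ w < ℓ (w * s i) then w * s i else w

theorem bruhatLE_maxMulSimple (w : W) (i : Fin r) : bruhatLE cs w (cs.maxMulSimple w i) := by
  unfold maxMulSimple
  split_ifs with h
  · exact cs.bruhatLE_mul_reflection (cs.isReflection_simple i) h
  · exact .refl

theorem maxMulSimple_bruhatLE_maxMulSimple_mul_reflection {w t : W} (ht : cs.IsReflection t)
    (hwt : ℓ w < ℓ (w * t)) (i : Fin r) :
    bruhatLE cs (cs.maxMulSimple w i) (cs.maxMulSimple (w * t) i) := by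
  have hstep := cs.bruhatLE_mul_reflection ht hwt
  by_cases hw : ℓ w < ℓ (w * s i)
  · have hws : ℓ (w * s i) = ℓ w + 1 := by
      rcases cs.length_mul_simple w i with h | h <;> omega
    rw [maxMulSimple, if_pos hw, maxMulSimple]
    split_ifs with hv
    · have hconj : w * t * s i = w * s i * (s i * t * s i) := by
        simp [mul_assoc]
      rw [hconj]
      refine cs.bruhatLE_mul_reflection (by simpa using ht.conj (s i)) ?_
      rw [← hconj]
      omega
    · have hv' : ℓ (w * t * s i) < ℓ (w * t) :=
        lt_of_le_of_ne (not_lt.mp hv) (cs.length_mul_simple_ne _ i)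
      have h := cs.mul_reflection_mul_simple_bruhatLE ht (t := t) (v := w * t) (i := i)
        (by rwa [mul_assoc, ht.mul_self, mul_one]) hv'
      rwa [mul_assoc w t t, ht.mul_self, mul_one] at h
  · rw [maxMulSimple, if_neg hw]
    exact hstep.trans (cs.bruhatLE_maxMulSimple _ i)

theorem maxMulSimple_mono {u v : W} (huv : bruhatLE cs u v) (i : Fin r) :
    bruhatLE cs (cs.maxMulSimple u i) (cs.maxMulSimple v i) := by
  refine Relation.ReflTransGen.lift' (fun w => cs.maxMulSimple w i) ?_ _ _ huv
  rintro w _ ⟨⟨t, ht, rfl⟩, hwt⟩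
  exact cs.maxMulSimple_bruhatLE_maxMulSimple_mul_reflection ht hwt i

/-- The lifting property of the Bruhat order. -/
theorem mul_simple_bruhatLE_mul_simple {u v : W} (huv : bruhatLE cs u v) {i : Fin r}
    (hv : ℓ v < ℓ (v * s i)) : bruhatLE cs (u * s i) (v * s i) := by
  by_cases hu : ℓ u < ℓ (u * s i)
  · simpa [maxMulSimple, hu, hv] using cs.maxMulSimple_mono huv i
  · have hu' : ℓ (u * s i) < ℓ u := lt_of_le_of_ne (not_lt.mp hu) (cs.length_mul_simple_ne u i)
    exact (cs.mul_reflection_bruhatLE (cs.isReflection_simple i) hu').trans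
      (huv.trans (cs.bruhatLE_mul_reflection (cs.isReflection_simple i) hv))

end BruhatOrder

section HeckeAlgebra

variable {B W : Type*} [Group W] {M : CoxeterMatrix B} (cs : CoxeterSystem M W)
  {K H : Type*} [CommRing K] [Ring H] [Algebra K H]

local prefix:100 "s" => cs.simple
local prefix:100 "π" => cs.wordProd
local prefix:100 "ℓ" => cs.length

/-- `b` is the standard basis `(h_w)` of a Hecke algebra with quadratic relation
`(h_s - t₁)(h_s - t₂) = 0`. -/
structure IsHeckeBasis (b : Module.Basis W K H) (t₁ t₂ : K) : Prop where
  one : b 1 = 1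
  mul_of_length_add : ∀ u v, ℓ (u * v) = ℓ u + ℓ v → b (u * v) = b u * b v
  quadratic : ∀ i, (b (s i) - algebraMap K H t₁) * (b (s i) - algebraMap K H t₂) = 0

/-- The Yang–Baxter basis is the case `c w i = (t₁ + t₂) / w(E(α_i))`. -/
structure IsYangBaxterFamily (b : Module.Basis W K H) (c : W → B → K) (Y : W → H) : Prop where
  one : Y 1 = 1
  mul_simple : ∀ w i, ℓ (w * s i) = ℓ w + 1 →
    Y (w * s i) = Y w * (b (s i) + algebraMap K H (c w i))

variable {cs}

variable {b : Module.Basis W K H} {t₁ t₂ : K}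

theorem IsHeckeBasis.mul_simple_of_length_lt (hH : cs.IsHeckeBasis b t₁ t₂) {w : W} {i : B}
    (h : ℓ w < ℓ (w * s i)) : b w * b (s i) = b (w * s i) := by
  refine (hH.mul_of_length_add w (s i) ?_).symm
  rcases cs.length_mul_simple w i with h' | h' <;> simp [length_simple] <;> omega

theorem IsHeckeBasis.simple_mul_self (hH : cs.IsHeckeBasis b t₁ t₂) (i : B) :
    b (s i) * b (s i) = (t₁ + t₂) • b (s i) - (t₁ * t₂) • 1 := by
  have hcomm : b (s i) * algebraMap K H t₂ = algebraMap K H t₂ * b (s i) :=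
    (Algebra.commutes _ _).symm
  calc b (s i) * b (s i)
      = (b (s i) - algebraMap K H t₁) * (b (s i) - algebraMap K H t₂)
        + (algebraMap K H t₁ + algebraMap K H t₂) * b (s i)
        - algebraMap K H t₁ * algebraMap K H t₂ := by
        rw [sub_mul, mul_sub, mul_sub, hcomm]; noncomm_ring
    _ = (t₁ + t₂) • b (s i) - (t₁ * t₂) • 1 := by
        rw [hH.quadratic, zero_add, Algebra.smul_def, Algebra.smul_def, map_add, map_mul,
          mul_one]

theorem IsHeckeBasis.mul_simple_of_length_gt (hH : cs.IsHeckeBasis b t₁ t₂) {w : W} {i : B}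
    (h : ℓ (w * s i) < ℓ w) :
    b w * b (s i) = (t₁ + t₂) • b w - (t₁ * t₂) • b (w * s i) := by
  have hw : b (w * s i) * b (s i) = b w := by
    rw [hH.mul_simple_of_length_lt (by rwa [simple_mul_simple_cancel_right]),
      simple_mul_simple_cancel_right]
  rw [← hw, mul_assoc, hH.simple_mul_self, mul_sub, mul_smul_comm, mul_smul_comm, mul_one]

theorem IsHeckeBasis.sumCoords_mul_simple (hH : cs.IsHeckeBasis b t₁ t₂)
    (hsum : t₁ + t₂ - t₁ * t₂ = 1) (x : H) (i : B) :
    b.sumCoords (x * b (s i)) = b.sumCoords x := by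
  have hbasis : ∀ w, b.sumCoords (b w * b (s i)) = 1 := fun w => by
    rcases lt_or_gt_of_ne (cs.length_mul_simple_ne w i) with h | h
    · rw [hH.mul_simple_of_length_gt h, map_sub, map_smul, map_smul, b.sumCoords_self_apply,
        b.sumCoords_self_apply, smul_eq_mul, smul_eq_mul, mul_one, mul_one, hsum]
    · rw [hH.mul_simple_of_length_lt h, b.sumCoords_self_apply]
  have h : b.sumCoords ∘ₗ LinearMap.mulRight K (b (s i)) = b.sumCoords :=
    b.ext fun w => by
      rw [LinearMap.comp_apply, LinearMap.mulRight_apply, hbasis, b.sumCoords_self_apply]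
  exact LinearMap.congr_fun h x

theorem IsYangBaxterFamily.sumCoords_wordProd {c : W → B → K} {Y : W → H}
    (hY : cs.IsYangBaxterFamily b c Y) (hH : cs.IsHeckeBasis b t₁ t₂)
    (hsum : t₁ + t₂ - t₁ * t₂ = 1) {ω : List B} (hω : cs.IsReduced ω) :
    b.sumCoords (Y (π ω)) = ∏ j : Fin ω.length, (1 + c (π (ω.take j)) (ω.get j)) := by
  set F : ℕ → K := fun k => if hk : k < ω.length then 1 + c (π (ω.take k)) ω[k] else 1
  have hstep : ∀ k < ω.length,
      b.sumCoords (Y (π (ω.take (k + 1)))) = b.sumCoords (Y (π (ω.take k))) * F k := by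
    intro k hk
    rw [wordProd_take_add_one cs ω hk, hY.mul_simple _ _ (hω.length_wordProd_take_mul_simple hk),
      mul_add, ← Algebra.commutes, ← Algebra.smul_def, map_add, hH.sumCoords_mul_simple hsum,
      map_smul, smul_eq_mul]
    simp only [F, dif_pos hk]
    ring
  have hbase : b.sumCoords (Y (π (ω.take 0))) = 1 := by
    rw [List.take_zero, wordProd_nil, hY.one, ← hH.one, b.sumCoords_self_apply]
  calc b.sumCoords (Y (π ω)) = ∏ k ∈ Finset.range ω.length, F k := by
        rw [Finset.prod_range_induction F (fun k => b.sumCoords (Y (π (ω.take k)))) hbase _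
          hstep, List.take_length]
    _ = ∏ j : Fin ω.length, F j := (Fin.prod_univ_eq_prod_range F _).symm
    _ = _ := Finset.prod_congr rfl fun j _ => dif_pos j.isLt

end HeckeAlgebra

section BruhatSpan

variable {r : ℕ} {W : Type*} [Group W] {M : CoxeterMatrix (Fin r)} {cs : CoxeterSystem M W}
  {K H : Type*} [CommRing K] [Ring H] [Algebra K H] {b : Module.Basis W K H} {t₁ t₂ : K}

local prefix:100 "s" => cs.simple
local prefix:100 "π" => cs.wordProd
local prefix:100 "ℓ" => cs.length

open Submodule in
theorem IsHeckeBasis.mul_simple_mem_span_bruhatLE (hH : cs.IsHeckeBasis b t₁ t₂) {v : W}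
    {i : Fin r} (hv : ℓ v < ℓ (v * s i)) {x : H}
    (hx : x ∈ span K (b '' {u | bruhatLE cs u v})) :
    x * b (s i) ∈ span K (b '' {u | bruhatLE cs u (v * s i)}) := by
  have hmap : (span K (b '' {u | bruhatLE cs u v})).map (LinearMap.mulRight K (b (s i)))
      ≤ span K (b '' {u | bruhatLE cs u (v * s i)}) := by
    rw [map_span, span_le]
    rintro _ ⟨_, ⟨u, hu, rfl⟩, rfl⟩
    have hus := cs.mul_simple_bruhatLE_mul_simple hu hv
    rw [LinearMap.mulRight_apply]
    rcases lt_or_gt_of_ne (cs.length_mul_simple_ne u i) with h | h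
    · have huv := hu.trans (cs.bruhatLE_mul_reflection (cs.isReflection_simple i) hv)
      rw [hH.mul_simple_of_length_gt h]
      exact sub_mem (smul_mem _ _ (subset_span ⟨u, huv, rfl⟩))
        (smul_mem _ _ (subset_span ⟨_, hus, rfl⟩))
    · rw [hH.mul_simple_of_length_lt h]
      exact subset_span ⟨_, hus, rfl⟩
  exact hmap (mem_map_of_mem hx)

open Submodule in
theorem IsYangBaxterFamily.mem_span_bruhatLE {c : W → Fin r → K} {Y : W → H}
    (hY : cs.IsYangBaxterFamily b c Y) (hH : cs.IsHeckeBasis b t₁ t₂) (w : W) :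
    Y w ∈ span K (b '' {u | bruhatLE cs u w}) := by
  obtain ⟨ω, hω, rfl⟩ := cs.exists_isReduced w
  suffices ∀ k ≤ ω.length,
      Y (π (ω.take k)) ∈ span K (b '' {u | bruhatLE cs u (π (ω.take k))}) by
    simpa using this _ le_rfl
  intro k hk
  induction k with
  | zero =>
    rw [List.take_zero, wordProd_nil, hY.one, ← hH.one]
    exact subset_span ⟨1, .refl, rfl⟩
  | succ k ih =>
    have hk' : k < ω.length := by omega
    have hlen := hω.length_wordProd_take_mul_simple hk'
    have hle : bruhatLE cs (π (ω.take k)) (π (ω.take k) * s ω[k]) :=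
      cs.bruhatLE_mul_reflection (cs.isReflection_simple ω[k]) (by omega)
    rw [wordProd_take_add_one cs ω hk', hY.mul_simple _ _ hlen, mul_add, ← Algebra.commutes,
      ← Algebra.smul_def]
    exact add_mem (hH.mul_simple_mem_span_bruhatLE (by omega) (ih hk'.le))
      (smul_mem _ _ (span_mono (Set.image_mono fun u hu => Relation.ReflTransGen.trans hu hle)
        (ih hk'.le)))

end BruhatSpan

end CoxeterSystem

theorem Module.Basis.sum_filter_repr_of_mem_span {ι R N : Type*} [Fintype ι] [Semiring R]
    [AddCommMonoid N] [Module R N] (b : Module.Basis ι R N) {p : ι → Prop} [DecidablePred p]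
    {x : N} (hx : x ∈ Submodule.span R (b '' {i | p i})) :
    ∑ i ∈ Finset.univ.filter p, b.repr x i = b.sumCoords x := by
  rw [Finset.sum_filter_of_ne (p := p) fun i _ hi =>
    b.mem_span_image.mp hx (Finsupp.mem_support_iff.mpr hi)]
  simp

theorem one_add_div_inv_sub_one {K : Type*} [Field K] {x : K} (hx0 : x ≠ 0) (hx1 : x ≠ 1)
    (a : K) : 1 + (1 - a) / (x⁻¹ - 1) = (1 - a * x) / (1 - x) := by
  have h : 1 - x ≠ 0 := sub_ne_zero.mpr hx1.symm
  have h' : x⁻¹ - 1 ≠ 0 := sub_ne_zero.mpr (inv_ne_one.mpr hx1)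
  field_simp
  ring

theorem sum_pCoeff_eq_prod_inversions_general
    {r : ℕ} {W : Type*} [Group W] [Fintype W] {M : CoxeterMatrix (Fin r)}
    (cs : CoxeterSystem M W)
    {Λ : Type*} [AddCommGroup Λ] (wΛ : W →* Multiplicative (AddAut Λ)) (α : Fin r → Λ)
    (hindep : LinearIndependent ℤ α)
    {K : Type*} [Field K] (exp : Multiplicative Λ →* Kˣ)
    (hexp_inj : Function.Injective exp)
    (t1 t2 : K) (wK : W →* RingAut K)
    (hwexp : ∀ (w : W) (lam : Λ),
      wK w ((exp (Multiplicative.ofAdd lam) : Kˣ) : K)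
        = ((exp (Multiplicative.ofAdd (wΛ w lam)) : Kˣ) : K))
    (q : K) (ht1 : t1 = -q⁻¹) (ht2 : t2 = 1)
    {H : Type*} [Ring H] [Algebra K H]
    (h : W → H) (hb : Module.Basis W K H)
    (hbasis : ∀ w : W, hb w = h w)
    (hone : h 1 = 1)
    (hmul : ∀ u v : W, cs.length (u * v) = cs.length u + cs.length v →
      h (u * v) = h u * h v)
    (hquad : ∀ i : Fin r,
      (h (cs.simple i) - algebraMap K H t1) * (h (cs.simple i) - algebraMap K H t2) = 0)
    (Y : W → H) (hY1 : Y 1 = 1)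
    (hYrec : ∀ (w : W) (i : Fin r), cs.length (w * cs.simple i) = cs.length w + 1 →
      Y (w * cs.simple i)
        = Y w * (h (cs.simple i) + algebraMap K H ((t1 + t2) / wK w (Eelt exp (α i)))))
    (v : W) (l : List (Fin r)) (hl : cs.wordProd l = v) (hred : cs.IsReduced l) :
    ∑ w ∈ Finset.univ.filter (fun w => bruhatLE cs w v), pCoeff hb Y w v
      = ∏ j : Fin l.length,
          (1 - q⁻¹ * ((exp (Multiplicative.ofAdd
              (wΛ (cs.wordProd (l.take j)) (α (l.get j)))) : Kˣ) : K)) /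
          (1 - ((exp (Multiplicative.ofAdd
              (wΛ (cs.wordProd (l.take j)) (α (l.get j)))) : Kˣ) : K)) := by
  subst ht1 ht2 hl
  obtain rfl : ⇑hb = h := funext hbasis
  have hH : cs.IsHeckeBasis hb (-q⁻¹) 1 := ⟨hone, hmul, hquad⟩
  have hY : cs.IsYangBaxterFamily hb (fun w i => (-q⁻¹ + 1) / wK w (Eelt exp (α i))) Y :=
    ⟨hY1, hYrec⟩
  have hroot : ∀ w i, ((exp (Multiplicative.ofAdd (wΛ w (α i))) : Kˣ) : K) ≠ 1 := by
    intro w i h1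
    have hβ : wΛ w (α i) = 0 := by
      simpa using hexp_inj ((Units.val_eq_one.mp h1).trans (map_one exp).symm)
    exact hindep.ne_zero i ((Multiplicative.toAdd (wΛ w)).injective (by rw [hβ, map_zero]))
  calc ∑ w ∈ Finset.univ.filter (fun w => bruhatLE cs w (cs.wordProd l)), pCoeff hb Y w _
      = hb.sumCoords (Y (cs.wordProd l)) :=
        hb.sum_filter_repr_of_mem_span (hY.mem_span_bruhatLE hH _)
    _ = _ := hY.sumCoords_wordProd hH (by ring) hred
    _ = _ := Finset.prod_congr rfl fun j _ => by
        rw [Eelt, map_sub, map_one, hwexp, map_neg, ofAdd_neg, map_inv, Units.val_inv_eq_inv_val,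
          neg_add_eq_sub]
        exact one_add_div_inv_sub_one (Units.ne_zero _) (hroot _ _) _

/-- with the parameters specialized to `t1 = -q⁻¹`, `t2 = 1` (`q` invertible),
`∑_{w ≤ v} p(w,v) = ∏_{β ∈ R(v)} (1 − q⁻¹ e^β)/(1 − e^β)`, the product being over the
inversion set `R(v) = {β_j = s_{i_1} ⋯ s_{i_{j-1}}(α_{i_j})}` of a reduced expression
`v = s_{i_1} ⋯ s_{i_ℓ}`. -/
theorem sum_pCoeff_eq_prod_inversions
    {r : ℕ} {W : Type*} [Group W] [Fintype W] {M : CoxeterMatrix (Fin r)}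
    (cs : CoxeterSystem M W)
    {Λ : Type*} [AddCommGroup Λ] (wΛ : W →* Multiplicative (AddAut Λ)) (α : Fin r → Λ)
    (coroot : Fin r → (Λ →+ ℤ))
    (hact : ∀ (i : Fin r) (lam : Λ), wΛ (cs.simple i) lam = lam - (coroot i lam) • α i)
    (hαα : ∀ i : Fin r, coroot i (α i) = 2)
    (hindep : LinearIndependent ℤ α)
    (hcart : ∀ i j : Fin r, i ≠ j →
      (M.M i j = 2 ∧ coroot i (α j) = 0 ∧ coroot j (α i) = 0) ∨
      (M.M i j = 3 ∧ coroot i (α j) = -1 ∧ coroot j (α i) = -1) ∨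
      (M.M i j = 4 ∧ coroot i (α j) * coroot j (α i) = 2 ∧
        coroot i (α j) < 0 ∧ coroot j (α i) < 0) ∨
      (M.M i j = 6 ∧ coroot i (α j) * coroot j (α i) = 3 ∧
        coroot i (α j) < 0 ∧ coroot j (α i) < 0))
    {K : Type*} [Field K] (exp : Multiplicative Λ →* Kˣ)
    (hexp_inj : Function.Injective exp)
    (t1 t2 : K) (wK : W →* RingAut K)
    (hwexp : ∀ (w : W) (lam : Λ),
      wK w ((exp (Multiplicative.ofAdd lam) : Kˣ) : K)
        = ((exp (Multiplicative.ofAdd (wΛ w lam)) : Kˣ) : K))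
    (hwt1 : ∀ w : W, wK w t1 = t1) (hwt2 : ∀ w : W, wK w t2 = t2)
    (q : K) (hq : q ≠ 0) (ht1 : t1 = -q⁻¹) (ht2 : t2 = 1)
    {H : Type*} [Ring H] [Algebra K H]
    (h : W → H) (hb : Module.Basis W K H)
    (hbasis : ∀ w : W, hb w = h w)
    (hone : h 1 = 1)
    (hmul : ∀ u v : W, cs.length (u * v) = cs.length u + cs.length v →
      h (u * v) = h u * h v)
    (hquad : ∀ i : Fin r,
      (h (cs.simple i) - algebraMap K H t1) * (h (cs.simple i) - algebraMap K H t2) = 0)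
    (Y : W → H) (hY1 : Y 1 = 1)
    (hYrec : ∀ (w : W) (i : Fin r), cs.length (w * cs.simple i) = cs.length w + 1 →
      Y (w * cs.simple i)
        = Y w * (h (cs.simple i) + algebraMap K H ((t1 + t2) / wK w (Eelt exp (α i)))))
    (v : W) (l : List (Fin r)) (hl : cs.wordProd l = v) (hred : cs.IsReduced l) :
    ∑ w ∈ Finset.univ.filter (fun w => bruhatLE cs w v), pCoeff hb Y w v
      = ∏ j : Fin l.length,
          (1 - q⁻¹ * ((exp (Multiplicative.ofAdd
              (wΛ (cs.wordProd (l.take j)) (α (l.get j)))) : Kˣ) : K)) /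
          (1 - ((exp (Multiplicative.ofAdd
              (wΛ (cs.wordProd (l.take j)) (α (l.get j)))) : Kˣ) : K)) :=
  sum_pCoeff_eq_prod_inversions_general cs wΛ α hindep exp hexp_inj t1 t2 wK hwexp q ht1 ht2 h hb
    hbasis hone hmul hquad Y hY1 hYrec v l hl hred
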